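/- arXiv:2012.14384 — 2 statements merged into one kernel-verified Lean document; each statement's English description precedes it below -/
import Mathlib

section
/- Suppose γ ∈ SL(3,ℝ) admits a Bruhat factorization γ = u₂ · d · z · w · u₁ where u₁, u₂ ∈ N, d ∈ A, z ∈ M₀, and w ∈ SL(3,ℝ) is a signed permutation matrix (each row and each column of w has exactly one nonzero entry, equal to 1 or −1). Then u₂ A u₂⁻¹ ⊆ P₀ and u₂ A u₂⁻¹ ⊆ γ P₀ γ⁻¹; that is, u₂ A u₂⁻¹ is a common split component of the minimal parabolic subgroups P₀ and γ P₀ γ⁻¹. -/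
/-! Conjugation by `γ = u₂ g u₁` with `g = d z w` carries `u₂ a u₂⁻¹` to `u₁⁻¹ (g⁻¹ a g) u₁`.
Diagonal matrices commute with `d` and `z`, and conjugating a diagonal matrix by a matrix with at
most one nonzero entry per column gives again a diagonal matrix, so `g⁻¹ a g` is diagonal. Both
`u₂ a u₂⁻¹` and `u₁⁻¹ (g⁻¹ a g) u₁` are then products of upper triangular matrices. -/

/-- `G = SL(3,ℝ)`. -/
abbrev SL3 := Matrix.SpecialLinearGroup (Fin 3) ℝ

/-- A matrix is upper triangular (membership in the standard minimal parabolic `P₀`). -/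
def IsUpperTri (M : Matrix (Fin 3) (Fin 3) ℝ) : Prop := ∀ i j : Fin 3, j < i → M i j = 0

/-- A matrix is upper triangular unipotent (membership in `N`). -/
def IsUnipUpperTri (M : Matrix (Fin 3) (Fin 3) ℝ) : Prop :=
  IsUpperTri M ∧ ∀ i : Fin 3, M i i = 1

/-- A matrix is diagonal with positive diagonal entries (membership in `A`). -/
def IsPosDiag (M : Matrix (Fin 3) (Fin 3) ℝ) : Prop :=
  (∀ i j : Fin 3, i ≠ j → M i j = 0) ∧ ∀ i : Fin 3, 0 < M i i

/-- A matrix is diagonal with diagonal entries `±1` (membership in `M₀`). -/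
def IsSignDiag (M : Matrix (Fin 3) (Fin 3) ℝ) : Prop :=
  (∀ i j : Fin 3, i ≠ j → M i j = 0) ∧ ∀ i : Fin 3, M i i = 1 ∨ M i i = -1

/-- A signed permutation matrix: each row and each column has exactly one nonzero entry,
and that entry is `1` or `-1`. -/
def IsSignedPerm (M : Matrix (Fin 3) (Fin 3) ℝ) : Prop :=
  (∀ i : Fin 3, ∃! j : Fin 3, M i j ≠ 0) ∧
  (∀ j : Fin 3, ∃! i : Fin 3, M i j ≠ 0) ∧
  (∀ i j : Fin 3, M i j = 0 ∨ M i j = 1 ∨ M i j = -1)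

namespace Matrix

variable {n α R : Type*}

theorem IsDiag.blockTriangular [Zero R] [Preorder α] {A : Matrix n n R} (hA : A.IsDiag)
    (b : n → α) : A.BlockTriangular b :=
  fun _ _ h => hA fun hij => (hij ▸ h).ne rfl

variable [Fintype n] [DecidableEq n]

theorem IsDiag.commute [CommSemiring R] {A B : Matrix n n R} (hA : A.IsDiag) (hB : B.IsDiag) :
    Commute A B := by
  rw [← hA.diagonal_diag, ← hB.diagonal_diag]
  exact commute_diagonal _ _

theorem IsDiag.exists_mul_eq_mul_diagonal [CommSemiring R] {A W : Matrix n n R} (hA : A.IsDiag)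
    (hW : ∀ j, {i | W i j ≠ 0}.Subsingleton) : ∃ c : n → R, A * W = W * diagonal c := by
  classical
  refine ⟨fun j => if h : ∃ i, W i j ≠ 0 then A h.choose h.choose else 0, ?_⟩
  ext i j
  conv_lhs => rw [← hA.diagonal_diag]
  rw [diagonal_mul, mul_diagonal]
  by_cases hij : W i j = 0
  · simp [hij]
  · have hex : ∃ i, W i j ≠ 0 := ⟨i, hij⟩
    rw [dif_pos hex, hW j hex.choose_spec hij, diag_apply, mul_comm]

namespace SpecialLinearGroup

variable [CommRing R]

theorem coe_inv_mul_mul_eq_of_mul_eq {g a : SpecialLinearGroup n R} {C : Matrix n n R}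
    (h : (a : Matrix n n R) * g = g * C) :
    ((g⁻¹ * a * g : SpecialLinearGroup n R) : Matrix n n R) = C := by
  rw [coe_mul, coe_mul, mul_assoc, h, ← mul_assoc, ← coe_mul, inv_mul_cancel, coe_one, one_mul]

variable [LinearOrder α] {b : n → α}

theorem blockTriangular_coe_inv {g : SpecialLinearGroup n R}
    (hg : (g : Matrix n n R).BlockTriangular b) :
    ((g⁻¹ : SpecialLinearGroup n R) : Matrix n n R).BlockTriangular b := by
  have h : ((g⁻¹ : SpecialLinearGroup n R) : Matrix n n R) * g = 1 := by
    rw [← coe_mul, inv_mul_cancel, coe_one]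
  have := invertibleOfLeftInverse _ _ h
  rw [← inv_eq_left_inv h]
  exact blockTriangular_inv_of_blockTriangular hg

theorem blockTriangular_coe_mul_mul_inv {g x : SpecialLinearGroup n R}
    (hg : (g : Matrix n n R).BlockTriangular b) (hx : (x : Matrix n n R).BlockTriangular b) :
    ((g * x * g⁻¹ : SpecialLinearGroup n R) : Matrix n n R).BlockTriangular b := by
  rw [coe_mul, coe_mul]
  exact (hg.mul hx).mul (blockTriangular_coe_inv hg)

end SpecialLinearGroup

end Matrix

open Matrix Matrix.SpecialLinearGroup

/-- If `γ = u₂ d z w u₁` is a Bruhat factorization, then `u₂ A u₂⁻¹` is a common split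
component of the minimal parabolic subgroups `P₀` and `γ P₀ γ⁻¹`. -/
theorem bruhat_gives_common_split_component
    (γ u₁ u₂ d z w : SL3)
    (hu₁ : IsUnipUpperTri (u₁ : Matrix (Fin 3) (Fin 3) ℝ))
    (hu₂ : IsUnipUpperTri (u₂ : Matrix (Fin 3) (Fin 3) ℝ))
    (hd : IsPosDiag (d : Matrix (Fin 3) (Fin 3) ℝ))
    (hz : IsSignDiag (z : Matrix (Fin 3) (Fin 3) ℝ))
    (hw : IsSignedPerm (w : Matrix (Fin 3) (Fin 3) ℝ))
    (hγ : γ = u₂ * d * z * w * u₁) :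
    ∀ a : SL3, IsPosDiag (a : Matrix (Fin 3) (Fin 3) ℝ) →
      IsUpperTri ((u₂ * a * u₂⁻¹ : SL3) : Matrix (Fin 3) (Fin 3) ℝ) ∧
      IsUpperTri ((γ⁻¹ * (u₂ * a * u₂⁻¹) * γ : SL3) : Matrix (Fin 3) (Fin 3) ℝ) := by
  intro a ha
  have ha_diag : IsDiag (a : Matrix (Fin 3) (Fin 3) ℝ) := ha.1
  have hd_diag : IsDiag (d : Matrix (Fin 3) (Fin 3) ℝ) := hd.1
  have hz_diag : IsDiag (z : Matrix (Fin 3) (Fin 3) ℝ) := hz.1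
  obtain ⟨c, hc⟩ := ha_diag.exists_mul_eq_mul_diagonal fun j _ h₁ _ h₂ => (hw.2.1 j).unique h₁ h₂
  have hag : (a : Matrix (Fin 3) (Fin 3) ℝ) * ((d * z * w : SL3) : Matrix (Fin 3) (Fin 3) ℝ) =
      ((d * z * w : SL3) : Matrix (Fin 3) (Fin 3) ℝ) * diagonal c := by
    have hcomm := (ha_diag.commute hd_diag).mul_right (ha_diag.commute hz_diag)
    simp only [Matrix.SpecialLinearGroup.coe_mul]
    rw [← mul_assoc, hcomm.eq, mul_assoc, hc]
    simp only [mul_assoc]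
  have hconj :
      γ⁻¹ * (u₂ * a * u₂⁻¹) * γ = u₁⁻¹ * ((d * z * w)⁻¹ * a * (d * z * w)) * u₁⁻¹⁻¹ := by
    rw [hγ]; group
  refine ⟨blockTriangular_coe_mul_mul_inv hu₂.1 (ha_diag.blockTriangular id), ?_⟩
  rw [hconj]
  refine blockTriangular_coe_mul_mul_inv (blockTriangular_coe_inv hu₁.1) ?_
  rw [coe_inv_mul_mul_eq_of_mul_eq hag]
  exact blockTriangular_diagonal c
end

section
/- For all w₁, w₂ ∈ S₃ and all λ = (λ₁,λ₂,λ₃) ∈ ℂ³ such that λ_a − λ_b ∉ {−1, 0, 1} and Ω(1 + λ_a − λ_b) ≠ 0 and Ω(λ_a − λ_b) ≠ 0 for all a ≠ b, the rank-two scattering matrices satisfy the cocycle relation C(w₂ ∘ w₁, λ) = C(w₂, w₁·λ) · C(w₁, λ), where (w·λ)_i := λ_{w⁻¹(i)}. -/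
open Complex

/-- The completed Riemann zeta function `Ω(s) = π^{-s/2} Γ(s/2) ζ(s)`. -/
noncomputable def Omega (s : ℂ) : ℂ :=
  (Real.pi : ℂ) ^ (-s / 2) * Complex.Gamma (s / 2) * riemannZeta s

/-- The rank-two scattering matrix of `SL(3,ℤ)\SL(3,ℝ)/SO(3)` attached to the minimal
parabolic subgroup of upper-triangular matrices:
`C(w,λ) = ∏_{a<b, w(a)>w(b)} Ω(λ_a-λ_b)/Ω(1+λ_a-λ_b)`. -/
noncomputable def scatC (w : Equiv.Perm (Fin 3)) (l : Fin 3 → ℂ) : ℂ :=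
  ∏ p ∈ Finset.univ.filter (fun p : Fin 3 × Fin 3 => p.1 < p.2 ∧ w p.2 < w p.1),
    Omega (l p.1 - l p.2) / Omega (1 + (l p.1 - l p.2))

lemma Omega_eq_completed {s : ℂ} (h0 : s ≠ 0) (hg : Omega s ≠ 0) :
    Omega s = completedRiemannZeta s := by
  have hG : Gammaℝ s ≠ 0 := by
    intro hG
    apply hg
    rw [Omega, ← Gammaℝ, hG, zero_mul]
  rw [Omega, ← Gammaℝ, riemannZeta_def_of_ne_zero h0, mul_div_cancel₀ _ hG]

lemma scatC_eq (w : Equiv.Perm (Fin 3)) (l : Fin 3 → ℂ) :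
    scatC w l = ∏ a : Fin 3, ∏ b : Fin 3,
      if a < b ∧ w b < w a then Omega (l a - l b) / Omega (1 + (l a - l b)) else 1 := by
  rw [scatC, Finset.prod_filter, Fintype.prod_prod_type]

lemma perm3_cases (w : Equiv.Perm (Fin 3)) :
    w = 1 ∨ w = Equiv.swap 0 1 ∨ w = Equiv.swap 0 2 ∨ w = Equiv.swap 1 2 ∨
    w = Equiv.swap 0 1 * Equiv.swap 0 2 ∨ w = Equiv.swap 0 2 * Equiv.swap 0 1 := by
  revert w; decide

set_option maxHeartbeats 4000000 in
/-- The cocycle relation `C(w₂ ∘ w₁, λ) = C(w₂, w₁·λ) C(w₁, λ)`, where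
`(w·λ)_i = λ_{w⁻¹(i)}`. -/
theorem scatC_cocycle (w₁ w₂ : Equiv.Perm (Fin 3)) (l : Fin 3 → ℂ)
    (h : ∀ a b : Fin 3, a ≠ b →
      l a - l b ∉ ({-1, 0, 1} : Set ℂ) ∧
      Omega (1 + (l a - l b)) ≠ 0 ∧ Omega (l a - l b) ≠ 0) :
    scatC (w₂ * w₁) l = scatC w₂ (fun i => l (w₁⁻¹ i)) * scatC w₁ l := by
  -- the inversion relation for factors
  have key : ∀ a b : Fin 3, a ≠ b →
      Omega (l b - l a) / Omega (1 + (l b - l a)) =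
        (Omega (l a - l b) / Omega (1 + (l a - l b)))⁻¹ := by
    intro a b hab
    obtain ⟨hmem, h1s, hs⟩ := h a b hab
    obtain ⟨hmem', h1s', hs'⟩ := h b a hab.symm
    simp only [Set.mem_insert_iff, Set.mem_singleton_iff, not_or] at hmem
    obtain ⟨hne1, h0, h1⟩ := hmem
    set s := l a - l b with hsdef
    have hba : l b - l a = -s := by ring
    rw [hba] at h1s' hs' ⊢
    have e1 : Omega (-s) = Omega (1 + s) := by
      rw [Omega_eq_completed (by simpa using h0) hs',
        Omega_eq_completed (by intro hc; apply hne1; linear_combination hc) h1s,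
        show -s = 1 - (1 + s) by ring, completedRiemannZeta_one_sub]
    have e2 : Omega (1 + -s) = Omega s := by
      rw [show (1 : ℂ) + -s = 1 - s by ring,
        Omega_eq_completed (by intro hc; apply h1; linear_combination -hc) (by
          rw [show (1:ℂ) - s = 1 + -s by ring]; exact h1s'),
        Omega_eq_completed h0 hs, completedRiemannZeta_one_sub]
    rw [e1, e2, inv_div]
  have hne : ∀ a b : Fin 3, a ≠ b →
      Omega (l a - l b) / Omega (1 + (l a - l b)) ≠ 0 := by
    intro a b hab
    obtain ⟨_, h1s, hs⟩ := h a b hab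
    exact div_ne_zero hs h1s
  have k10 := key 0 1 (by decide)
  have k20 := key 0 2 (by decide)
  have k21 := key 1 2 (by decide)
  have n01 := hne 0 1 (by decide)
  have n02 := hne 0 2 (by decide)
  have n12 := hne 1 2 (by decide)
  simp only [scatC_eq, Fin.prod_univ_three]
  rcases perm3_cases w₁ with h1|h1|h1|h1|h1|h1 <;>
  rcases perm3_cases w₂ with h2|h2|h2|h2|h2|h2 <;>
  subst h1 h2 <;>
  simp (config := { decide := true }) only [Equiv.Perm.mul_apply, mul_inv_rev, Equiv.swap_inv,
    inv_one, one_mul, mul_one, Equiv.Perm.one_apply, Equiv.swap_apply_left,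
    Equiv.swap_apply_right, Equiv.swap_apply_of_ne_of_ne, Equiv.swap_apply_def, if_true, if_false] <;>
  (try simp only [k10, k20, k21]) <;>
  (clear h key hne) <;>
  (generalize Omega (l 0 - l 1) / Omega (1 + (l 0 - l 1)) = x at n01 ⊢) <;>
  (generalize Omega (l 0 - l 2) / Omega (1 + (l 0 - l 2)) = y at n02 ⊢) <;>
  (generalize Omega (l 1 - l 2) / Omega (1 + (l 1 - l 2)) = z at n12 ⊢) <;>
  (try field_simp)
  all_goals first | rfl | exact Or.inl trivial | tauto | ring | simp
  all_goals left
  all_goals trivial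
end
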